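/- arXiv:2010.08496 — 6 statements merged into one kernel-verified Lean document; each statement's English description precedes it below -/
import Mathlib

section
/- Let $X$ be a finite measure space with measure $\lambda$, and let $u, v : X \to \mathbb{R}$ be bounded measurable functions. Then there exists $\xi \in [0,1]$ such that $\log\int_X e^{u+v}\,d\lambda \le \log\int_X e^{u}\,d\lambda + \int_X v\,\Lambda(u)\,d\lambda + \tfrac{1}{2}\int_X v^2\,\Lambda(u + \xi v)\,d\lambda$, where $\Lambda(w) = e^{w} / \int_X e^{w}\,d\lambda$ denotes the logit (Gibbs) density associated to $w$. -/
/-!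
The log-partition function `φ t = log ∫ exp (u + t v) dμ` is twice differentiable, with `φ' t` the
Gibbs mean and `φ'' t` the Gibbs variance of `v` under the density `gibbsDensity μ (u + t v)`:
boundedness of `u` and `v` dominates the `t`-derivatives of the integrands, so one may differentiate
under the integral sign. Taylor's theorem with Lagrange remainder on `[0, 1]` and the bound of the
variance by the second moment give the claim.
-/

open MeasureTheory

/-- The Gibbs (logit) density associated to a potential `w` under measure `μ`. -/
noncomputable def gibbsDensity {X : Type*} [MeasurableSpace X] (μ : Measure X)
    (w : X → ℝ) : X → ℝ :=
  fun x => Real.exp (w x) / ∫ y, Real.exp (w y) ∂μ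

open Set Real

theorem exists_mem_Ioo_eq_taylor_two {f f' f'' : ℝ → ℝ} {a b : ℝ} (hab : a < b)
    (hf : ∀ t, HasDerivAt f (f' t) t) (hf' : ∀ t, HasDerivAt f' (f'' t) t) :
    ∃ ξ ∈ Ioo a b, f b = f a + f' a * (b - a) + f'' ξ / 2 * (b - a) ^ 2 := by
  have hba : b - a ≠ 0 := sub_ne_zero.2 hab.ne'
  set M : ℝ := 2 * (f b - f a - f' a * (b - a)) / (b - a) ^ 2 with hM
  -- `M` is chosen so that `g` vanishes at `a` and `b`; then apply Rolle to `g` and to `g'`.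
  set g : ℝ → ℝ := fun t => f t - f a - f' a * (t - a) - M / 2 * (t - a) ^ 2
  set g' : ℝ → ℝ := fun t => f' t - f' a - M * (t - a)
  have hg : ∀ t, HasDerivAt g (g' t) t := fun t => by
    refine ((((hf t).sub_const (f a)).sub (((hasDerivAt_id t).sub_const a).const_mul (f' a))).sub
      ((((hasDerivAt_id t).sub_const a).pow 2).const_mul (M / 2))).congr_deriv ?_
    simp only [g', id]
    ring
  have hg' : ∀ t, HasDerivAt g' (f'' t - M) t := fun t => by
    refine (((hf' t).sub_const (f' a)).sub
      (((hasDerivAt_id t).sub_const a).const_mul M)).congr_deriv ?_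
    ring
  have hgab : g a = g b := by
    simp only [g, hM]
    field_simp
    ring
  obtain ⟨c, hc, hg'c⟩ := exists_hasDerivAt_eq_zero hab
    (fun t _ => (hg t).continuousAt.continuousWithinAt) hgab (fun t _ => hg t)
  have hg'ac : g' a = g' c := by simp [g', hg'c]
  obtain ⟨ξ, hξ, hξM⟩ := exists_hasDerivAt_eq_zero hc.1
    (fun t _ => (hg' t).continuousAt.continuousWithinAt) hg'ac (fun t _ => hg' t)
  refine ⟨ξ, ⟨hξ.1, hξ.2.trans hc.2⟩, ?_⟩
  rw [sub_eq_zero.1 hξM, hM]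
  field_simp
  ring

section ExponentialTilt

variable {X : Type*} {u v b : X → ℝ} {Cu Cv D : ℝ}

lemma exp_add_mul_le (hCu : ∀ x, |u x| ≤ Cu) (hCv : ∀ x, |v x| ≤ Cv) (t : ℝ) (x : X) :
    exp (u x + t * v x) ≤ exp (Cu + |t| * Cv) := by
  have hux : u x ≤ Cu := (abs_le.1 (hCu x)).2
  have htv : t * v x ≤ |t| * Cv := calc
    t * v x ≤ |t| * |v x| := (le_abs_self _).trans (abs_mul _ _).le
    _ ≤ |t| * Cv := mul_le_mul_of_nonneg_left (hCv x) (abs_nonneg t)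
  exact exp_le_exp.2 (by linarith)

lemma abs_mul_exp_add_mul_le (hCu : ∀ x, |u x| ≤ Cu) (hCv : ∀ x, |v x| ≤ Cv)
    (hD : ∀ x, |b x| ≤ D) (t : ℝ) (x : X) :
    |b x * exp (u x + t * v x)| ≤ D * exp (Cu + |t| * Cv) := by
  rw [abs_mul, abs_exp]
  exact mul_le_mul (hD x) (exp_add_mul_le hCu hCv t x) (exp_pos _).le
    ((abs_nonneg _).trans (hD x))

variable [MeasurableSpace X] {μ : Measure X}

lemma integral_mul_gibbsDensity (f w : X → ℝ) :
    ∫ x, f x * gibbsDensity μ w x ∂μ = (∫ x, f x * exp (w x) ∂μ) / ∫ x, exp (w x) ∂μ := by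
  simp only [gibbsDensity, ← mul_div_assoc]
  exact integral_div _ _

variable [IsFiniteMeasure μ]

lemma integrable_mul_exp_add_mul (hu : Measurable u) (hv : Measurable v) (hb : Measurable b)
    (hCu : ∀ x, |u x| ≤ Cu) (hCv : ∀ x, |v x| ≤ Cv) (hD : ∀ x, |b x| ≤ D) (t : ℝ) :
    Integrable (fun x => b x * exp (u x + t * v x)) μ :=
  .of_bound (hb.mul (hu.add (hv.const_mul t)).exp).aestronglyMeasurable _
    (ae_of_all _ (abs_mul_exp_add_mul_le hCu hCv hD t))

theorem hasDerivAt_integral_mul_exp_add_mul (hu : Measurable u) (hv : Measurable v)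
    (hb : Measurable b) (hCu : ∀ x, |u x| ≤ Cu) (hCv : ∀ x, |v x| ≤ Cv) (hD : ∀ x, |b x| ≤ D)
    (t₀ : ℝ) :
    HasDerivAt (fun t => ∫ x, b x * exp (u x + t * v x) ∂μ)
      (∫ x, b x * v x * exp (u x + t₀ * v x) ∂μ) t₀ := by
  have hbv : ∀ x, |b x * v x| ≤ D * Cv := fun x => by
    rw [abs_mul]
    exact mul_le_mul (hD x) (hCv x) (abs_nonneg _) ((abs_nonneg _).trans (hD x))
  refine (hasDerivAt_integral_of_dominated_loc_of_deriv_le (Metric.ball_mem_nhds t₀ one_pos)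
    (F' := fun t x => b x * v x * exp (u x + t * v x))
    (bound := fun _ => D * Cv * exp (Cu + (|t₀| + 1) * Cv)) ?_
    (integrable_mul_exp_add_mul hu hv hb hCu hCv hD t₀) ?_ ?_ (integrable_const _) ?_).2
  · exact .of_forall fun t => (hb.mul (hu.add (hv.const_mul t)).exp).aestronglyMeasurable
  · exact ((hb.mul hv).mul (hu.add (hv.const_mul t₀)).exp).aestronglyMeasurable
  · refine ae_of_all _ fun x t ht => ?_
    have hCv0 : 0 ≤ Cv := (abs_nonneg _).trans (hCv x)
    have hDCv0 : 0 ≤ D * Cv := (abs_nonneg _).trans (hbv x)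
    have ht : |t| ≤ |t₀| + 1 := by
      rw [Metric.mem_ball, dist_eq] at ht
      linarith [abs_sub_abs_le_abs_sub t t₀]
    calc ‖b x * v x * exp (u x + t * v x)‖ ≤ D * Cv * exp (Cu + |t| * Cv) :=
          abs_mul_exp_add_mul_le hCu hCv hbv t x
      _ ≤ D * Cv * exp (Cu + (|t₀| + 1) * Cv) := by gcongr
  · exact ae_of_all _ fun x t _ =>
      (((hasDerivAt_mul_const (v x)).const_add (u x)).exp.const_mul (b x)).congr_deriv (by ring)

lemma hasDerivAt_integral_exp_add_mul (hu : Measurable u) (hv : Measurable v)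
    (hCu : ∀ x, |u x| ≤ Cu) (hCv : ∀ x, |v x| ≤ Cv) (t : ℝ) :
    HasDerivAt (fun t => ∫ x, exp (u x + t * v x) ∂μ) (∫ x, v x * exp (u x + t * v x) ∂μ) t := by
  simpa only [one_mul] using hasDerivAt_integral_mul_exp_add_mul (b := fun _ => 1) hu hv
    measurable_const hCu hCv (fun _ => abs_one.le) t

variable [NeZero μ]

lemma integral_exp_add_mul_pos (hu : Measurable u) (hv : Measurable v)
    (hCu : ∀ x, |u x| ≤ Cu) (hCv : ∀ x, |v x| ≤ Cv) (t : ℝ) :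
    0 < ∫ x, exp (u x + t * v x) ∂μ :=
  integral_exp_pos (by
    simpa only [one_mul] using integrable_mul_exp_add_mul (b := fun _ => 1) hu hv
      measurable_const hCu hCv (fun _ => abs_one.le) t)

theorem hasDerivAt_log_integral_exp_add_mul (hu : Measurable u) (hv : Measurable v)
    (hCu : ∀ x, |u x| ≤ Cu) (hCv : ∀ x, |v x| ≤ Cv) (t : ℝ) :
    HasDerivAt (fun t => log (∫ x, exp (u x + t * v x) ∂μ))
      (∫ x, v x * gibbsDensity μ (fun y => u y + t * v y) x ∂μ) t := by
  rw [integral_mul_gibbsDensity]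
  exact (hasDerivAt_integral_exp_add_mul hu hv hCu hCv t).log
    (integral_exp_add_mul_pos hu hv hCu hCv t).ne'

theorem hasDerivAt_integral_mul_gibbsDensity_add_mul (hu : Measurable u) (hv : Measurable v)
    (hCu : ∀ x, |u x| ≤ Cu) (hCv : ∀ x, |v x| ≤ Cv) (t : ℝ) :
    HasDerivAt (fun t => ∫ x, v x * gibbsDensity μ (fun y => u y + t * v y) x ∂μ)
      ((∫ x, v x ^ 2 * gibbsDensity μ (fun y => u y + t * v y) x ∂μ)
        - (∫ x, v x * gibbsDensity μ (fun y => u y + t * v y) x ∂μ) ^ 2) t := by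
  have hZ := hasDerivAt_integral_exp_add_mul (μ := μ) hu hv hCu hCv t
  have hZ₁ := hasDerivAt_integral_mul_exp_add_mul (μ := μ) hu hv hv hCu hCv hCv t
  simp only [← sq] at hZ₁
  have hZ_pos := integral_exp_add_mul_pos (μ := μ) hu hv hCu hCv t
  simp only [integral_mul_gibbsDensity]
  refine (hZ₁.div hZ hZ_pos.ne').congr_deriv ?_
  generalize ∫ x, v x ^ 2 * exp (u x + t * v x) ∂μ = Z₂
  generalize ∫ x, v x * exp (u x + t * v x) ∂μ = Z₁
  generalize ∫ x, exp (u x + t * v x) ∂μ = Z at hZ_pos ⊢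
  field_simp

end ExponentialTilt

/-- second-order Taylor bound for the log-partition functional. -/
theorem logsumexp_second_order_bound
    {X : Type*} [MeasurableSpace X] (μ : Measure X) [IsFiniteMeasure μ]
    (u v : X → ℝ) (hu : Measurable u) (hv : Measurable v)
    (hub : ∃ C, ∀ x, |u x| ≤ C) (hvb : ∃ C, ∀ x, |v x| ≤ C) :
    ∃ ξ ∈ Set.Icc (0:ℝ) 1,
      Real.log (∫ x, Real.exp (u x + v x) ∂μ)
        ≤ Real.log (∫ x, Real.exp (u x) ∂μ)
          + ∫ x, v x * gibbsDensity μ u x ∂μ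
          + (1/2) * ∫ x, (v x) ^ 2 * gibbsDensity μ (fun y => u y + ξ * v y) x ∂μ := by
  rcases eq_zero_or_neZero μ with rfl | _
  · exact ⟨0, left_mem_Icc.2 zero_le_one, by simp⟩
  obtain ⟨Cu, hCu⟩ := hub
  obtain ⟨Cv, hCv⟩ := hvb
  obtain ⟨ξ, hξ, htaylor⟩ := exists_mem_Ioo_eq_taylor_two zero_lt_one
    (hasDerivAt_log_integral_exp_add_mul (μ := μ) hu hv hCu hCv)
    (hasDerivAt_integral_mul_gibbsDensity_add_mul (μ := μ) hu hv hCu hCv)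
  refine ⟨ξ, Ioo_subset_Icc_self hξ, ?_⟩
  simp only [zero_mul, add_zero, one_mul, sub_zero, one_pow, mul_one] at htaylor
  rw [htaylor]
  -- the Gibbs variance is at most the second moment
  nlinarith [sq_nonneg (∫ x, v x * gibbsDensity μ (fun y => u y + ξ * v y) x ∂μ)]
end

section
/- Let $h$ be a $K$-strongly convex regularizer on a normed space with mirror map $Q$ and Fenchel coupling $F$ as above. Then for all $x \in \mathrm{dom}\,h$, all $y \in V^*$, and all $w \in V^*$, with $q = Q(y)$: $F(x, y + w) \le F(x, y) + \langle w, q - x\rangle + \tfrac{1}{2K}\|w\|_*^2$, where $\|\cdot\|_*$ is the dual norm. -/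
/-!
Write `g = h - y`, which is `K`-strongly convex on `D` and minimised there at `q = Q y`.
Strong convexity makes the minimum quadratically sharp: `g q + K/2 ‖p - q‖² ≤ g p`
for `p = Q (y + w)`. After the three-point rewriting of `F(x, y + w) - F(x, y) - ⟨w, q - x⟩`
as `w (p - q) - (g p - g q)`, this sharp minimum absorbs the `K/2 ‖p - q‖²` half of
Young's inequality `w (p - q) ≤ K/2 ‖p - q‖² + ‖w‖² / (2K)`.
-/

section

open Set Filter Topology

variable {E : Type*} [NormedAddCommGroup E] [NormedSpace ℝ E]

lemma strongConvexOn_of_forall_mem_Icc {s : Set E} {m : ℝ} {f : E → ℝ} (hs : Convex ℝ s)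
    (hf : ∀ x ∈ s, ∀ x' ∈ s, ∀ t ∈ Icc (0 : ℝ) 1,
      f (t • x + (1 - t) • x')
        ≤ t * f x + (1 - t) * f x' - (m / 2) * t * (1 - t) * ‖x - x'‖ ^ 2) :
    StrongConvexOn s m f := by
  refine ⟨hs, fun x hx x' hx' a b ha hb hab ↦ ?_⟩
  obtain rfl : b = 1 - a := by linarith
  exact (hf x hx x' hx' a ⟨ha, by linarith⟩).trans_eq (by simp only [smul_eq_mul]; ring)

lemma UniformConvexOn.sub_linearMap {s : Set E} {φ : ℝ → ℝ} {f : E → ℝ}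
    (hf : UniformConvexOn s φ f) (ℓ : E →ₗ[ℝ] ℝ) : UniformConvexOn s φ (f - ℓ) := by
  simpa using hf.sub (ℓ.concaveOn hf.1).uniformConcaveOn_zero

lemma UniformConvexOn.add_le_of_isMinOn {s : Set E} {φ : ℝ → ℝ} {f : E → ℝ} {p q : E}
    (hf : UniformConvexOn s φ f) (hmin : IsMinOn f s q) (hq : q ∈ s) (hp : p ∈ s) :
    f q + φ ‖p - q‖ ≤ f p := by
  have hsegment : ∀ t ∈ Ioo (0 : ℝ) 1, f q + (1 - t) * φ ‖p - q‖ ≤ f p := by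
    rintro t ⟨ht0, ht1⟩
    have hmid := hf.2 hp hq ht0.le (sub_nonneg.2 ht1.le) (add_sub_cancel t 1)
    have hqle := isMinOn_iff.1 hmin _
      (hf.1 hp hq ht0.le (sub_nonneg.2 ht1.le) (add_sub_cancel t 1))
    rw [smul_eq_mul, smul_eq_mul] at hmid
    refine le_of_mul_le_mul_left ?_ ht0
    linarith
  have hlim : Tendsto (fun t : ℝ ↦ f q + (1 - t) * φ ‖p - q‖) (𝓝[>] 0)
      (𝓝 (f q + φ ‖p - q‖)) := by
    refine Tendsto.mono_left ?_ nhdsWithin_le_nhds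
    have hcont : Continuous fun t : ℝ ↦ f q + (1 - t) * φ ‖p - q‖ := by fun_prop
    simpa using hcont.tendsto 0
  refine le_of_tendsto hlim ?_
  filter_upwards [Ioo_mem_nhdsGT one_pos] with t ht using hsegment t ht

lemma ContinuousLinearMap.apply_le_mul_norm_sq_add_opNorm_sq (ℓ : E →L[ℝ] ℝ) (v : E)
    {K : ℝ} (hK : 0 < K) : ℓ v ≤ K / 2 * ‖v‖ ^ 2 + ‖ℓ‖ ^ 2 / (2 * K) := by
  have hbound : ℓ v ≤ ‖ℓ‖ * ‖v‖ := (Real.le_norm_self _).trans (ℓ.le_opNorm v)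
  have hsq : 0 ≤ (K * ‖v‖ - ‖ℓ‖) ^ 2 / (2 * K) := by positivity
  have hexpand : (K * ‖v‖ - ‖ℓ‖) ^ 2 / (2 * K)
      = K / 2 * ‖v‖ ^ 2 + ‖ℓ‖ ^ 2 / (2 * K) - ‖ℓ‖ * ‖v‖ := by
    field_simp
    ring
  linarith

end

theorem fenchel_coupling_step_bound_general
    {V : Type*} [NormedAddCommGroup V] [NormedSpace ℝ V]
    (D : Set V)
    (h : V → ℝ) (K : ℝ) (hK : 0 < K)
    (hconv : ConvexOn ℝ D h)
    -- `K`-strong convexity of `h` on its domain `D`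
    (hstrong : ∀ x ∈ D, ∀ x' ∈ D, ∀ t ∈ Set.Icc (0:ℝ) 1,
      h (t • x + (1 - t) • x')
        ≤ t * h x + (1 - t) * h x' - (K / 2) * t * (1 - t) * ‖x - x'‖ ^ 2)
    (hstar : (V →L[ℝ] ℝ) → ℝ) (Q : (V →L[ℝ] ℝ) → V)
    (hQmem : ∀ y, Q y ∈ D)
    (hsup : ∀ y, ∀ x ∈ D, y x - h x ≤ hstar y)
    (hatt : ∀ y, hstar y = y (Q y) - h (Q y)) :
    ∀ x ∈ D, ∀ y w : V →L[ℝ] ℝ,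
      h x + hstar (y + w) - (y + w) x
        ≤ (h x + hstar y - y x) + w (Q y - x) + (1 / (2 * K)) * ‖w‖ ^ 2 := by
  intro x _ y w
  have hmin : IsMinOn (h - ⇑y) D (Q y) := isMinOn_iff.2 fun z hz ↦ by
    have := hsup y z hz
    rw [hatt y] at this
    simp only [Pi.sub_apply]
    linarith
  have hstrongConvex : StrongConvexOn D K (h - ⇑y) :=
    (strongConvexOn_of_forall_mem_Icc hconv.1 hstrong).sub_linearMap y.toLinearMap
  have hsharp : (h - ⇑y) (Q y) + K / 2 * ‖Q (y + w) - Q y‖ ^ 2 ≤ (h - ⇑y) (Q (y + w)) :=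
    hstrongConvex.add_le_of_isMinOn hmin (hQmem y) (hQmem (y + w))
  have hyoung := w.apply_le_mul_norm_sq_add_opNorm_sq (Q (y + w) - Q y) hK
  rw [hatt, hatt]
  simp only [Pi.sub_apply, add_apply, map_sub] at hsharp hyoung ⊢
  rw [one_div_mul_eq_div]
  linarith

/-- one-step bound on the Fenchel coupling after a dual step `w`. -/
theorem fenchel_coupling_step_bound
    {V : Type*} [NormedAddCommGroup V] [NormedSpace ℝ V]
    (D : Set V) (hD : D.Nonempty)
    (h : V → ℝ) (K : ℝ) (hK : 0 < K)
    (hconv : ConvexOn ℝ D h)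
    -- `K`-strong convexity of `h` on its domain `D`
    (hstrong : ∀ x ∈ D, ∀ x' ∈ D, ∀ t ∈ Set.Icc (0:ℝ) 1,
      h (t • x + (1 - t) • x')
        ≤ t * h x + (1 - t) * h x' - (K / 2) * t * (1 - t) * ‖x - x'‖ ^ 2)
    (hstar : (V →L[ℝ] ℝ) → ℝ) (Q : (V →L[ℝ] ℝ) → V)
    (hQmem : ∀ y, Q y ∈ D)
    (hsup : ∀ y, ∀ x ∈ D, y x - h x ≤ hstar y)
    (hatt : ∀ y, hstar y = y (Q y) - h (Q y)) :
    ∀ x ∈ D, ∀ y w : V →L[ℝ] ℝ,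
      h x + hstar (y + w) - (y + w) x
        ≤ (h x + hstar y - y x) + w (Q y - x) + (1 / (2 * K)) * ‖w‖ ^ 2 :=
  fenchel_coupling_step_bound_general D h K hK hconv hstrong hstar Q hQmem hsup hatt
end

section
/- Let $h$ be a proper convex regularizer with conjugate $h^*$ and mirror map $Q$ attaining the conjugate supremum, and assume $h^*$ is differentiable with $\nabla_w h^*(y) = \langle w, Q(y)\rangle$. Then for any fixed $y$, the function $\varphi(\eta) = \eta^{-1}\,[\,h^*(\eta y) + \min h\,]$ is nondecreasing on $(0,\infty)$; equivalently, for $0 < \eta' \le \eta$, $\frac{1}{\eta'}h^*(\eta' y) - \frac{1}{\eta}h^*(\eta y) \le \big(\frac{1}{\eta} - \frac{1}{\eta'}\big)\min h$. -/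
/-- monotonicity of `η ↦ η⁻¹ [h*(η y) + min h]`, the key step
allowing time-varying learning rates in dual averaging. -/
theorem conjugate_rescaling_monotone
    {V : Type*} [NormedAddCommGroup V] [NormedSpace ℝ V]
    (D : Set V) (hD : D.Nonempty)
    (h : V → ℝ) (hconv : ConvexOn ℝ D h)
    (hstar : (V →L[ℝ] ℝ) → ℝ) (Q : (V →L[ℝ] ℝ) → V)
    (hQmem : ∀ z, Q z ∈ D)
    (hsup : ∀ z, ∀ x ∈ D, z x - h x ≤ hstar z)
    (hatt : ∀ z, hstar z = z (Q z) - h (Q z))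
    -- differentiability of `h*` with gradient `Q`: `∇_w h*(z) = ⟨w, Q z⟩`
    (hderiv : ∀ z w : V →L[ℝ] ℝ,
      HasDerivAt (fun t : ℝ => hstar (z + t • w)) (w (Q z)) 0)
    -- `m` is the minimum of `h` over its domain
    (m : ℝ) (hmin : IsLeast (h '' D) m)
    (y : V →L[ℝ] ℝ) :
    MonotoneOn (fun η : ℝ => η⁻¹ * (hstar (η • y) + m)) (Set.Ioi 0)
    ∧ ∀ η η' : ℝ, 0 < η' → η' ≤ η →
        (1 / η') * hstar (η' • y) - (1 / η) * hstar (η • y)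
          ≤ (1 / η - 1 / η') * m := by
  set g : ℝ → ℝ := fun η => hstar (η • y) with hg
  -- g is convex on ℝ
  have gconv : ConvexOn ℝ Set.univ g := by
    refine ⟨convex_univ, ?_⟩
    intro a _ b _ p q hp hq hpq
    have key : g (p * a + q * b) =
        p * (((a • y) (Q ((p * a + q * b) • y))) - h (Q ((p * a + q * b) • y)))
        + q * (((b • y) (Q ((p * a + q * b) • y))) - h (Q ((p * a + q * b) • y))) := by
      simp only [hg, hatt ((p * a + q * b) • y)]
      simp only [ContinuousLinearMap.smul_apply, smul_eq_mul]
      linear_combination h (Q ((p * a + q * b) • y)) * hpq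
    rw [smul_eq_mul, smul_eq_mul, key]
    have h1 := hsup (a • y) _ (hQmem ((p * a + q * b) • y))
    have h2 := hsup (b • y) _ (hQmem ((p * a + q * b) • y))
    have := mul_le_mul_of_nonneg_left h1 hp
    have := mul_le_mul_of_nonneg_left h2 hq
    simp only [smul_eq_mul] at *
    linarith
  -- g 0 = -m
  have g0 : g 0 = -m := by
    have e : ((0:ℝ) • y) = 0 := zero_smul ℝ y
    have h1 : hstar 0 = - h (Q 0) := by
      rw [hatt 0]; simp
    have h2 : m ≤ h (Q 0) := hmin.2 ⟨Q 0, hQmem _, rfl⟩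
    obtain ⟨x, hx, hxm⟩ := hmin.1
    have h3 := hsup 0 x hx
    simp only [ContinuousLinearMap.zero_apply, zero_sub] at h3
    simp only [hg, e]
    linarith
  have mono : MonotoneOn (fun η : ℝ => η⁻¹ * (hstar (η • y) + m)) (Set.Ioi 0) := by
    intro a ha b hb hab
    have ha' : (0:ℝ) < a := ha
    have hb' : (0:ℝ) < b := hb
    have := gconv.secant_mono (a := 0) (x := a) (y := b) (Set.mem_univ _)
      (Set.mem_univ _) (Set.mem_univ _) (ne_of_gt ha') (ne_of_gt hb') hab
    simp only [sub_zero, g0, sub_neg_eq_add] at this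
    calc a⁻¹ * (hstar (a • y) + m) = (g a + m) / a := by rw [hg]; ring
      _ ≤ (g b + m) / b := this
      _ = b⁻¹ * (hstar (b • y) + m) := by rw [hg]; ring
  refine ⟨mono, ?_⟩
  intro η η' hη' hle
  have hη : (0:ℝ) < η := lt_of_lt_of_le hη' hle
  have := mono (Set.mem_Ioi.mpr hη') (Set.mem_Ioi.mpr hη) hle
  simp only at this
  have h1 : η'⁻¹ * hstar (η' • y) + η'⁻¹ * m ≤ η⁻¹ * hstar (η • y) + η⁻¹ * m := by
    nlinarith [this]
  rw [one_div, one_div]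
  linarith
end

section
/- Under the dual averaging recursion of the previous statement (with loss models $v_t$, iterates $x_t = Q(\eta_t y_t)$, $y_{t+1} = y_t - v_t$), for any comparator $p \in \mathrm{dom}\,h$ and true losses $\ell_t$ with error $\epsilon_t = v_t - \ell_t$, the regret $R_p(T) = \sum_{t=1}^T \langle \ell_t, x_t - p\rangle$ satisfies $R_p(T) \le \eta_{T+1}^{-1}[h(p) - \min h] + \sum_{t=1}^T \langle \epsilon_t, p - x_t\rangle + \tfrac{1}{2K}\sum_{t=1}^T \eta_t \|v_t\|_*^2$. -/
/-!
The energy `E t = η t⁻¹ F(p, η t • y t)`, with `F` the Fenchel coupling of `h`, is nonnegative by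
Fenchel–Young. Since `K`-strong convexity of `h` makes its conjugate `(1 / K)`-smooth, and
`η ↦ η⁻¹ (h^*(η • z) + min h)` is nondecreasing, one step of the recursion raises `E` by at most
`⟨v t, p - x t⟩ + (η (t + 1)⁻¹ - η t⁻¹) (h p - min h) + η t ‖v t‖² / (2K)`. Telescoping from
`E 1 = η 1⁻¹ (h p - min h)` and splitting `ℓ t = v t - ε t` gives the bound.
-/

open Finset Filter Topology

section MirrorMap

variable {V : Type*} [NormedAddCommGroup V] [NormedSpace ℝ V] {D : Set V} {h : V → ℝ} {K m : ℝ}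

theorem StrongConvexOn.apply_sub_add_sq_le_of_isMaxOn (hh : StrongConvexOn D K h)
    {z : V →L[ℝ] ℝ} {q x : V} (hq : q ∈ D) (hmax : IsMaxOn (fun x => z x - h x) D q)
    (hx : x ∈ D) :
    z x - z q + K / 2 * ‖x - q‖ ^ 2 ≤ h x - h q := by
  have hsegment : ∀ t ∈ Set.Ioc (0 : ℝ) 1,
      z x - z q + K / 2 * (1 - t) * ‖x - q‖ ^ 2 ≤ h x - h q := by
    rintro t ⟨ht0, ht1⟩
    have hstrong := hh.2 hx hq ht0.le (sub_nonneg.2 ht1) (add_sub_cancel t 1)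
    have hopt := isMaxOn_iff.1 hmax _ (hh.1 hx hq ht0.le (sub_nonneg.2 ht1) (add_sub_cancel t 1))
    simp only [map_add, map_smul, smul_eq_mul] at hstrong hopt
    have : t * (z x - z q + K / 2 * (1 - t) * ‖x - q‖ ^ 2 - (h x - h q)) ≤ 0 := by nlinarith
    exact sub_nonpos.1 (nonpos_of_mul_nonpos_right this ht0)
  have hlim : Tendsto (fun t : ℝ => z x - z q + K / 2 * (1 - t) * ‖x - q‖ ^ 2) (𝓝[>] 0)
      (𝓝 (z x - z q + K / 2 * ‖x - q‖ ^ 2)) := by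
    refine tendsto_nhdsWithin_of_tendsto_nhds ?_
    have hcont : Continuous fun t : ℝ => z x - z q + K / 2 * (1 - t) * ‖x - q‖ ^ 2 := by
      fun_prop
    simpa using hcont.tendsto 0
  exact le_of_tendsto hlim (eventually_of_mem (Ioc_mem_nhdsGT one_pos) hsegment)

/-- `hstar` is the convex conjugate of `h` on `D`, attained at the mirror map `Q`. -/
structure IsMirrorMap (D : Set V) (h : V → ℝ) (hstar : (V →L[ℝ] ℝ) → ℝ)
    (Q : (V →L[ℝ] ℝ) → V) : Prop where
  mem : ∀ z, Q z ∈ D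
  le_conj : ∀ z, ∀ x ∈ D, z x - h x ≤ hstar z
  conj_eq : ∀ z, hstar z = z (Q z) - h (Q z)

def fenchelCoupling (h : V → ℝ) (hstar : (V →L[ℝ] ℝ) → ℝ) (p : V) (z : V →L[ℝ] ℝ) : ℝ :=
  h p + hstar z - z p

namespace IsMirrorMap

variable {hstar : (V →L[ℝ] ℝ) → ℝ} {Q : (V →L[ℝ] ℝ) → V} (hQ : IsMirrorMap D h hstar Q)
include hQ

theorem isMaxOn (z : V →L[ℝ] ℝ) : IsMaxOn (fun x => z x - h x) D (Q z) :=
  fun x hx => (hQ.le_conj z x hx).trans (hQ.conj_eq z).le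

/-- Strong convexity of `h` makes its conjugate `(1 / K)`-smooth. -/
theorem conj_add_le (hh : StrongConvexOn D K h) (hK : 0 < K) (z w : V →L[ℝ] ℝ) :
    hstar (z + w) ≤ hstar z + w (Q z) + ‖w‖ ^ 2 / (2 * K) := by
  have hgrowth := hh.apply_sub_add_sq_le_of_isMaxOn (hQ.mem z) (hQ.isMaxOn z) (hQ.mem (z + w))
  have hw : w (Q (z + w)) - w (Q z) ≤ ‖w‖ * ‖Q (z + w) - Q z‖ := by
    rw [← map_sub]
    exact (le_abs_self _).trans (w.le_opNorm _)
  have hyoung : ‖w‖ * ‖Q (z + w) - Q z‖ - K / 2 * ‖Q (z + w) - Q z‖ ^ 2 ≤ ‖w‖ ^ 2 / (2 * K) := by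
    rw [le_div_iff₀ (by positivity)]
    nlinarith [sq_nonneg (K * ‖Q (z + w) - Q z‖ - ‖w‖)]
  rw [hQ.conj_eq (z + w), hQ.conj_eq z, add_apply]
  linarith

theorem inv_mul_conj_smul_add_le (hm : ∀ x ∈ D, m ≤ h x) (z : V →L[ℝ] ℝ) {a b : ℝ}
    (ha : 0 < a) (hab : a ≤ b) :
    a⁻¹ * (hstar (a • z) + m) ≤ b⁻¹ * (hstar (b • z) + m) := by
  have hb : 0 < b := ha.trans_le hab
  set q := Q (a • z)
  have hgap : 0 ≤ h q - m := sub_nonneg.2 (hm q (hQ.mem _))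
  have hsup : b * z q - h q ≤ hstar (b • z) := by
    simpa using hQ.le_conj (b • z) q (hQ.mem _)
  calc a⁻¹ * (hstar (a • z) + m) = z q - a⁻¹ * (h q - m) := by
        rw [hQ.conj_eq, smul_apply, smul_eq_mul]; field_simp; ring
    _ ≤ z q - b⁻¹ * (h q - m) := by gcongr
    _ = b⁻¹ * (b * z q - h q + m) := by field_simp; ring
    _ ≤ b⁻¹ * (hstar (b • z) + m) := by gcongr

theorem conj_zero (hmin : IsLeast (h '' D) m) : hstar 0 = -m := by
  obtain ⟨⟨x₀, hx₀, rfl⟩, hlow⟩ := hmin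
  have hQ0 : h x₀ ≤ h (Q 0) := hlow ⟨Q 0, hQ.mem 0, rfl⟩
  have := hQ.le_conj 0 x₀ hx₀
  rw [hQ.conj_eq] at this ⊢
  simp only [zero_apply, zero_sub, neg_inj] at this ⊢
  linarith

theorem fenchelCoupling_nonneg {p : V} (hp : p ∈ D) (z : V →L[ℝ] ℝ) :
    0 ≤ fenchelCoupling h hstar p z := by
  have := hQ.le_conj z p hp
  unfold fenchelCoupling
  linarith

/-- One step of the energy recursion for `E = η⁻¹ F(p, η y)`, with `F` the Fenchel coupling. -/
theorem inv_mul_fenchelCoupling_sub_le (hh : StrongConvexOn D K h) (hK : 0 < K)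
    (hm : ∀ x ∈ D, m ≤ h x) (p : V) (y v : V →L[ℝ] ℝ) {η η' : ℝ} (hη' : 0 < η')
    (hη'η : η' ≤ η) :
    η'⁻¹ * fenchelCoupling h hstar p (η' • (y - v))
      ≤ η⁻¹ * fenchelCoupling h hstar p (η • y) + v (p - Q (η • y))
        + (η'⁻¹ - η⁻¹) * (h p - m) + 1 / (2 * K) * (η * ‖v‖ ^ 2) := by
  have hη : 0 < η := hη'.trans_le hη'η
  have hmono := hQ.inv_mul_conj_smul_add_le hm (y - v) hη' hη'η
  have hsmooth := hQ.conj_add_le hh hK (η • y) (-(η • v))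
  rw [show η • y + -(η • v) = η • (y - v) by module, norm_neg, norm_smul,
    Real.norm_of_nonneg hη.le, neg_apply, smul_apply, smul_eq_mul] at hsmooth
  simp only [fenchelCoupling, smul_apply, smul_eq_mul, sub_apply, map_sub]
  calc η'⁻¹ * (h p + hstar (η' • (y - v)) - η' * (y p - v p))
      = η'⁻¹ * (h p - m) + η'⁻¹ * (hstar (η' • (y - v)) + m) - (y p - v p) := by
        field_simp; ring
    _ ≤ η'⁻¹ * (h p - m) + η⁻¹ * (hstar (η • (y - v)) + m) - (y p - v p) := by gcongr
    _ ≤ η'⁻¹ * (h p - m) + η⁻¹ * (hstar (η • y) + -(η * v (Q (η • y)))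
          + (η * ‖v‖) ^ 2 / (2 * K) + m) - (y p - v p) := by gcongr
    _ = _ := by field_simp; ring

end IsMirrorMap

end MirrorMap

theorem le_add_sum_Icc_of_succ_le {E a : ℕ → ℝ} (hstep : ∀ t, E (t + 1) ≤ E t + a t) (T : ℕ) :
    E (T + 1) ≤ E 1 + ∑ t ∈ Icc 1 T, a t := by
  induction T with
  | zero => simp
  | succ n ih =>
    rw [sum_Icc_succ_top (by omega)]
    linarith [hstep (n + 1)]

theorem dual_averaging_regret_bound_general
    {V : Type*} [NormedAddCommGroup V] [NormedSpace ℝ V]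
    (D : Set V)
    (h : V → ℝ) (K : ℝ) (hK : 0 < K)
    (hconv : ConvexOn ℝ D h)
    (hstrong : ∀ x ∈ D, ∀ x' ∈ D, ∀ t ∈ Set.Icc (0:ℝ) 1,
      h (t • x + (1 - t) • x')
        ≤ t * h x + (1 - t) * h x' - (K / 2) * t * (1 - t) * ‖x - x'‖ ^ 2)
    (hstar : (V →L[ℝ] ℝ) → ℝ) (Q : (V →L[ℝ] ℝ) → V)
    (hQmem : ∀ z, Q z ∈ D)
    (hsup : ∀ z, ∀ x ∈ D, z x - h x ≤ hstar z)
    (hatt : ∀ z, hstar z = z (Q z) - h (Q z))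
    (m : ℝ) (hmin : IsLeast (h '' D) m)
    (η : ℕ → ℝ) (hη : ∀ t, 0 < η t) (hmono : ∀ t, η (t + 1) ≤ η t)
    -- loss models `v t`, true losses `ℓ t`, errors `ε t`, scores, iterates
    (v ℓ ε y : ℕ → V →L[ℝ] ℝ) (x : ℕ → V)
    (hε : ∀ t, ε t = v t - ℓ t)
    (hy1 : y 1 = 0) (hyrec : ∀ t, y (t + 1) = y t - v t)
    (hx : ∀ t, x t = Q (η t • y t))
    (p : V) (hp : p ∈ D) (T : ℕ) :
    ∑ t ∈ Finset.Icc 1 T, (ℓ t) (x t - p)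
      ≤ (η (T + 1))⁻¹ * (h p - m)
        + ∑ t ∈ Finset.Icc 1 T, (ε t) (p - x t)
        + (1 / (2 * K)) * ∑ t ∈ Finset.Icc 1 T, η t * ‖v t‖ ^ 2 := by
  have hh : StrongConvexOn D K h := by
    refine ⟨hconv.1, fun x₁ hx₁ x₂ hx₂ a b ha hb hab => ?_⟩
    obtain rfl : b = 1 - a := by linarith
    have := hstrong x₁ hx₁ x₂ hx₂ a ⟨ha, by linarith⟩
    simp only [smul_eq_mul]
    linarith
  have hQ : IsMirrorMap D h hstar Q := ⟨hQmem, hsup, hatt⟩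
  have hm : ∀ w ∈ D, m ≤ h w := fun w hw => hmin.2 ⟨w, hw, rfl⟩
  -- the energy `E t = η t⁻¹ F(p, η t y t)`, shifted so that the `h p - m` terms telescope away
  set Φ : ℕ → ℝ := fun t => (η t)⁻¹ * fenchelCoupling h hstar p (η t • y t) - (η t)⁻¹ * (h p - m)
  have hstep : ∀ t, Φ (t + 1) ≤ Φ t + (v t (p - x t) + 1 / (2 * K) * (η t * ‖v t‖ ^ 2)) := by
    intro t
    have := hQ.inv_mul_fenchelCoupling_sub_le hh hK hm p (y t) (v t) (hη (t + 1)) (hmono t)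
    simp only [Φ, hyrec, hx]
    linarith
  have hΦ₁ : Φ 1 = 0 := by
    simp only [Φ, hy1, smul_zero, fenchelCoupling, hQ.conj_zero hmin, zero_apply]
    ring
  have hΦT : -((η (T + 1))⁻¹ * (h p - m)) ≤ Φ (T + 1) := by
    have := mul_nonneg (inv_nonneg.2 (hη (T + 1)).le)
      (hQ.fenchelCoupling_nonneg hp (η (T + 1) • y (T + 1)))
    simp only [Φ]
    linarith
  have hloss : ∀ t, ℓ t (x t - p) = -v t (p - x t) + ε t (p - x t) := by
    intro t
    simp only [hε, sub_apply, map_sub]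
    ring
  have htel := le_add_sum_Icc_of_succ_le hstep T
  simp only [hloss, sum_add_distrib, sum_neg_distrib, ← mul_sum] at htel ⊢
  linarith

/-- template regret bound for dual averaging with inexact loss
models, obtained by telescoping the energy recursion. -/
theorem dual_averaging_regret_bound
    {V : Type*} [NormedAddCommGroup V] [NormedSpace ℝ V]
    (D : Set V) (hD : D.Nonempty)
    (h : V → ℝ) (K : ℝ) (hK : 0 < K)
    (hconv : ConvexOn ℝ D h)
    (hstrong : ∀ x ∈ D, ∀ x' ∈ D, ∀ t ∈ Set.Icc (0:ℝ) 1,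
      h (t • x + (1 - t) • x')
        ≤ t * h x + (1 - t) * h x' - (K / 2) * t * (1 - t) * ‖x - x'‖ ^ 2)
    (hstar : (V →L[ℝ] ℝ) → ℝ) (Q : (V →L[ℝ] ℝ) → V)
    (hQmem : ∀ z, Q z ∈ D)
    (hsup : ∀ z, ∀ x ∈ D, z x - h x ≤ hstar z)
    (hatt : ∀ z, hstar z = z (Q z) - h (Q z))
    (m : ℝ) (hmin : IsLeast (h '' D) m)
    (η : ℕ → ℝ) (hη : ∀ t, 0 < η t) (hmono : ∀ t, η (t + 1) ≤ η t)
    -- loss models `v t`, true losses `ℓ t`, errors `ε t`, scores, iterates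
    (v ℓ ε y : ℕ → V →L[ℝ] ℝ) (x : ℕ → V)
    (hε : ∀ t, ε t = v t - ℓ t)
    (hy1 : y 1 = 0) (hyrec : ∀ t, y (t + 1) = y t - v t)
    (hx : ∀ t, x t = Q (η t • y t))
    (p : V) (hp : p ∈ D) (T : ℕ) :
    ∑ t ∈ Finset.Icc 1 T, (ℓ t) (x t - p)
      ≤ (η (T + 1))⁻¹ * (h p - m)
        + ∑ t ∈ Finset.Icc 1 T, (ε t) (p - x t)
        + (1 / (2 * K)) * ∑ t ∈ Finset.Icc 1 T, η t * ‖v t‖ ^ 2 :=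
  dual_averaging_regret_bound_general D h K hK hconv hstrong hstar Q hQmem hsup hatt m hmin η hη
    hmono v ℓ ε y x hε hy1 hyrec hx p hp T
end

section
/- In the setting of the kernel-based bandit estimator, suppose additionally that the sampling density satisfies $\pi(z) \ge \epsilon/\lambda(X)$ for all $z \in X$ (explicit exploration with mixing weight $\epsilon > 0$), that $0 \le u \le 1$, and that there exist constants $c_m, c_M > 0$ (depending only on $X$) with $c_m \delta^d \le \lambda(N_\delta(x)) \le c_M\delta^d$ for all $x \in X$. Then for any probability density $q$ on $X$, $\mathbb{E}_{Z\sim\pi}\Big[\int_X q(x)\,\hat{u}(x)^2\,dx\Big] \le \frac{\lambda(X)\,c_M}{c_m^2}\,\delta^{-d}\,\epsilon^{-1}$, where $\hat{u}(x) = K^\delta(Z,x)u(Z)/\pi(Z)$. -/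
open MeasureTheory

/-!
Bound one of the two kernel factors in `q(x) K(z,x)² u(z)² / π(z)` by its supremum
`(c_m δ^d)⁻¹` and `u² / π` by `λ(X) / ε`, keeping the other factor `K(z,x)`. After swapping the
integrals (Fubini), the kernel integrates to `1` in `z` for each `x ∈ X`, and `∫ q = 1` leaves
`λ(X) / (c_m δ^d ε)`, which is at most the claimed bound since `c_m ≤ c_M`. Keeping one kernel
factor is what gives `δ^{-d}` rather than `δ^{-2d}`.
-/

section UniformKernel

variable {E : Type*} [PseudoMetricSpace E] [MeasurableSpace E]

noncomputable def uniformKernel (μ : Measure E) (s : Set E) (δ : ℝ) (z x : E) : ℝ :=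
  (μ.real (Metric.closedBall x δ ∩ s))⁻¹ * if dist z x ≤ δ then 1 else 0

variable {μ : Measure E} {s : Set E} {δ : ℝ}

theorem uniformKernel_nonneg (z x : E) : 0 ≤ uniformKernel μ s δ z x := by
  unfold uniformKernel
  positivity

theorem uniformKernel_le_inv {c : ℝ} (hc : 0 < c) {x : E}
    (hx : c ≤ μ.real (Metric.closedBall x δ ∩ s)) (z : E) : uniformKernel μ s δ z x ≤ c⁻¹ := by
  unfold uniformKernel
  calc _ ≤ (μ.real (Metric.closedBall x δ ∩ s))⁻¹ * 1 := by gcongr; split_ifs <;> norm_num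
    _ ≤ c⁻¹ := by rw [mul_one]; exact inv_anti₀ hc hx

theorem setIntegral_uniformKernel [OpensMeasurableSpace E] {x : E}
    (hx : μ.real (Metric.closedBall x δ ∩ s) ≠ 0) :
    ∫ z in s, uniformKernel μ s δ z x ∂μ = 1 := by
  have hball :
      (fun z => if dist z x ≤ δ then (1 : ℝ) else 0) = (Metric.closedBall x δ).indicator 1 := by
    ext z
    by_cases h : dist z x ≤ δ <;> simp [h, Metric.mem_closedBall]
  have hmeas := (Metric.isClosed_closedBall (x := x) (ε := δ)).measurableSet
  unfold uniformKernel
  rw [integral_const_mul, hball, integral_indicator_one hmeas, measureReal_restrict_apply hmeas]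
  exact inv_mul_cancel₀ hx

theorem measurable_measure_closedBall_inter [OpensMeasurableSpace E] [SecondCountableTopology E]
    (μ : Measure E) [SFinite μ] (hs : MeasurableSet s) (δ : ℝ) :
    Measurable fun x => μ (Metric.closedBall x δ ∩ s) := by
  have hset : MeasurableSet {w : E × E | dist w.2 w.1 ≤ δ ∧ w.2 ∈ s} :=
    (measurableSet_le (f := fun w : E × E => dist w.2 w.1) (by fun_prop) measurable_const).inter
      (measurable_snd hs)
  exact measurable_measure_prodMk_left hset

theorem measurable_uncurry_uniformKernel [OpensMeasurableSpace E] [SecondCountableTopology E]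
    [SFinite μ] (hs : MeasurableSet s) : Measurable (Function.uncurry (uniformKernel μ s δ)) := by
  have hm := (measurable_measure_closedBall_inter μ hs δ).ennreal_toReal
  have hball : MeasurableSet {w : E × E | dist w.1 w.2 ≤ δ} :=
    measurableSet_le (by fun_prop) measurable_const
  exact (hm.comp measurable_snd).inv.mul (Measurable.ite hball measurable_const measurable_const)

end UniformKernel

theorem sq_div_mul_le_of_le {k u π B p : ℝ} (hk0 : 0 ≤ k) (hkB : k ≤ B) (hu0 : 0 ≤ u)
    (hu1 : u ≤ 1) (hp : 0 < p) (hpπ : p ≤ π) :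
    (k * u / π) ^ 2 * π ≤ B / p * k := by
  have hπ : 0 < π := hp.trans_le hpπ
  have hku : (k * u) ^ 2 ≤ B * k := by
    rw [mul_pow]
    calc k ^ 2 * u ^ 2 ≤ k ^ 2 * 1 := by gcongr; exact pow_le_one₀ hu0 hu1
      _ ≤ B * k := by nlinarith
  calc (k * u / π) ^ 2 * π = (k * u) ^ 2 / π := by field_simp
    _ ≤ B * k / p := div_le_div₀ (by nlinarith) hku hp hpπ
    _ = B / p * k := by ring

section KernelEstimator

variable {α : Type*} [MeasurableSpace α] {μ : Measure α}

theorem integral_integral_le_of_le_mul_kernel [SFinite μ] {F k : α → α → ℝ} {q : α → ℝ} {C : ℝ}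
    (hF : Integrable (Function.uncurry F) (μ.prod μ))
    (hFle : ∀ᵐ x ∂μ, ∀ᵐ z ∂μ, F z x ≤ C * (q x * k z x))
    (hk1 : ∀ᵐ x ∂μ, ∫ z, k z x ∂μ = 1) (hq : Integrable q μ) :
    ∫ z, ∫ x, F z x ∂μ ∂μ ≤ C * ∫ x, q x ∂μ := by
  rw [integral_integral_swap hF, ← integral_const_mul]
  refine integral_mono_ae hF.swap.integral_prod_left (hq.const_mul C) ?_
  filter_upwards [hF.prod_left_ae, hFle, hk1] with x hFx hFle hk1
  calc ∫ z, F z x ∂μ ≤ ∫ z, C * (q x * k z x) ∂μ :=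
        integral_mono_ae hFx
          (((Integrable.of_integral_ne_zero (by simp [hk1])).const_mul (q x)).const_mul C) hFle
    _ = C * q x := by rw [integral_const_mul, integral_const_mul, hk1, mul_one]

theorem kernel_estimator_second_moment_le [IsFiniteMeasure μ] {k : α → α → ℝ} {u π q : α → ℝ}
    {B p : ℝ} (hkm : Measurable (Function.uncurry k)) (hum : Measurable u) (hπm : Measurable π)
    (hqm : Measurable q) (hk0 : ∀ z x, 0 ≤ k z x) (hkB : ∀ᵐ x ∂μ, ∀ z, k z x ≤ B)
    (hk1 : ∀ᵐ x ∂μ, ∫ z, k z x ∂μ = 1) (hu : ∀ z, u z ∈ Set.Icc 0 1) (hp : 0 < p)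
    (hπ : ∀ᵐ z ∂μ, p ≤ π z) (hq0 : ∀ x, 0 ≤ q x) (hq1 : ∫ x, q x ∂μ = 1) :
    ∫ z, (∫ x, q x * (k z x * u z / π z) ^ 2 ∂μ) * π z ∂μ ≤ B / p := by
  set F : α → α → ℝ := fun z x => q x * (k z x * u z / π z) ^ 2 * π z
  have hFle : ∀ᵐ x ∂μ, ∀ z, p ≤ π z → F z x ≤ B / p * (q x * k z x) := by
    filter_upwards [hkB] with x hkB z hπz
    calc F z x = q x * ((k z x * u z / π z) ^ 2 * π z) := mul_assoc _ _ _
      _ ≤ q x * (B / p * k z x) := mul_le_mul_of_nonneg_left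
          (sq_div_mul_le_of_le (hk0 z x) (hkB z) (hu z).1 (hu z).2 hp hπz) (hq0 x)
      _ = B / p * (q x * k z x) := by ring
  have hq : Integrable q μ := Integrable.of_integral_ne_zero (by simp [hq1])
  have hF : Integrable (Function.uncurry F) (μ.prod μ) := by
    refine ((hq.comp_snd μ).const_mul (B / p * B)).mono' (by fun_prop) ?_
    filter_upwards [Measure.quasiMeasurePreserving_snd.ae hFle,
      Measure.quasiMeasurePreserving_snd.ae hkB, Measure.quasiMeasurePreserving_fst.ae hπ]
      with ⟨z, x⟩ hFle hkB hπz
    have hF0 : 0 ≤ F z x := by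
      have := hp.trans_le hπz
      have := hq0 x
      positivity
    change ‖F z x‖ ≤ B / p * B * q x
    have hB : 0 ≤ B := (hk0 z x).trans (hkB z)
    calc ‖F z x‖ = F z x := Real.norm_of_nonneg hF0
      _ ≤ B / p * (q x * k z x) := hFle z hπz
      _ ≤ B / p * (q x * B) := by gcongr; exacts [hq0 x, hkB z]
      _ = B / p * B * q x := by ring
  calc ∫ z, (∫ x, q x * (k z x * u z / π z) ^ 2 ∂μ) * π z ∂μ = ∫ z, ∫ x, F z x ∂μ ∂μ := by
        simp only [F, integral_mul_const]
    _ ≤ B / p * ∫ x, q x ∂μ := integral_integral_le_of_le_mul_kernel hF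
        (by filter_upwards [hFle] with x hx; filter_upwards [hπ] with z hz using hx z hz) hk1 hq
    _ = B / p := by rw [hq1, mul_one]

end KernelEstimator

theorem kernel_estimator_second_moment_bound_general
    {d : ℕ} (X : Set (EuclideanSpace ℝ (Fin d)))
    (hXmeas : MeasurableSet X)
    (hXpos : 0 < (volume X).toReal)
    (u : EuclideanSpace ℝ (Fin d) → ℝ) (hum : Measurable u)
    (hu01 : ∀ z, u z ∈ Set.Icc (0:ℝ) 1)
    (δ : ℝ) (hδ : 0 < δ)
    (Kδ : EuclideanSpace ℝ (Fin d) → EuclideanSpace ℝ (Fin d) → ℝ)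
    (hK : Kδ = fun z x =>
      ((volume (Metric.closedBall x δ ∩ X)).toReal)⁻¹
        * if dist z x ≤ δ then 1 else 0)
    -- two-sided volume bounds on the kernel neighborhoods
    (cm cM : ℝ) (hcm : 0 < cm)
    (hvol : ∀ x ∈ X,
      cm * δ ^ d ≤ (volume (Metric.closedBall x δ ∩ X)).toReal
        ∧ (volume (Metric.closedBall x δ ∩ X)).toReal ≤ cM * δ ^ d)
    -- sampling density `π` on `X` with explicit exploration of weight `ε`
    (ε : ℝ) (hε : 0 < ε)
    (π : EuclideanSpace ℝ (Fin d) → ℝ) (hπm : Measurable π)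
    (hπlb : ∀ z ∈ X, ε / (volume X).toReal ≤ π z)
    -- arbitrary probability density `q` on `X`
    (q : EuclideanSpace ℝ (Fin d) → ℝ) (hqm : Measurable q)
    (hq0 : ∀ x, 0 ≤ q x) (hq1 : (∫ x in X, q x) = 1) :
    (∫ z in X, (∫ x in X, q x * (Kδ z x * u z / π z) ^ 2) * π z)
      ≤ (volume X).toReal * cM / cm ^ 2 * (δ ^ d)⁻¹ * ε⁻¹ := by
  obtain rfl : Kδ = uniformKernel volume X δ := hK
  have hXfin : volume X ≠ ⊤ := (ENNReal.toReal_pos_iff.1 hXpos).2.ne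
  have : IsFiniteMeasure (volume.restrict X) := isFiniteMeasure_restrict.2 hXfin
  obtain ⟨x₀, hx₀⟩ : X.Nonempty :=
    nonempty_of_measure_ne_zero (ENNReal.toReal_pos_iff.1 hXpos).1.ne'
  have hδd : 0 < δ ^ d := pow_pos hδ d
  have hcmM : cm ≤ cM := le_of_mul_le_mul_right ((hvol x₀ hx₀).1.trans (hvol x₀ hx₀).2) hδd
  have hvolpos : 0 < cm * δ ^ d := mul_pos hcm hδd
  have hX : ∀ᵐ x ∂volume.restrict X, x ∈ X := ae_restrict_mem hXmeas
  calc _ ≤ (cm * δ ^ d)⁻¹ / (ε / (volume X).toReal) :=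
        kernel_estimator_second_moment_le (measurable_uncurry_uniformKernel hXmeas) hum hπm hqm
          uniformKernel_nonneg
          (hX.mono fun x hx => uniformKernel_le_inv hvolpos (hvol x hx).1)
          (hX.mono fun x hx => setIntegral_uniformKernel (hvolpos.trans_le (hvol x hx).1).ne')
          hu01 (div_pos hε hXpos) (hX.mono hπlb) hq0 hq1
    _ = (volume X).toReal * cm / cm ^ 2 * (δ ^ d)⁻¹ * ε⁻¹ := by field_simp
    _ ≤ (volume X).toReal * cM / cm ^ 2 * (δ ^ d)⁻¹ * ε⁻¹ := by gcongr

/-- second-moment bound `O(δ^{-d} ε^{-1})` for the kernel-based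
importance-weighted bandit estimator under explicit exploration. -/
theorem kernel_estimator_second_moment_bound
    {d : ℕ} (X : Set (EuclideanSpace ℝ (Fin d)))
    (hXc : IsCompact X) (hXconv : Convex ℝ X) (hXmeas : MeasurableSet X)
    (hXpos : 0 < (volume X).toReal)
    (u : EuclideanSpace ℝ (Fin d) → ℝ) (hum : Measurable u)
    (hu01 : ∀ z, u z ∈ Set.Icc (0:ℝ) 1)
    (δ : ℝ) (hδ : 0 < δ)
    (Kδ : EuclideanSpace ℝ (Fin d) → EuclideanSpace ℝ (Fin d) → ℝ)
    (hK : Kδ = fun z x =>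
      ((volume (Metric.closedBall x δ ∩ X)).toReal)⁻¹
        * if dist z x ≤ δ then 1 else 0)
    -- two-sided volume bounds on the kernel neighborhoods
    (cm cM : ℝ) (hcm : 0 < cm) (hcM : 0 < cM)
    (hvol : ∀ x ∈ X,
      cm * δ ^ d ≤ (volume (Metric.closedBall x δ ∩ X)).toReal
        ∧ (volume (Metric.closedBall x δ ∩ X)).toReal ≤ cM * δ ^ d)
    -- sampling density `π` on `X` with explicit exploration of weight `ε`
    (ε : ℝ) (hε : 0 < ε)
    (π : EuclideanSpace ℝ (Fin d) → ℝ) (hπm : Measurable π)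
    (hπlb : ∀ z ∈ X, ε / (volume X).toReal ≤ π z)
    (hπ1 : (∫ z in X, π z) = 1)
    -- arbitrary probability density `q` on `X`
    (q : EuclideanSpace ℝ (Fin d) → ℝ) (hqm : Measurable q)
    (hq0 : ∀ x, 0 ≤ q x) (hq1 : (∫ x in X, q x) = 1) :
    (∫ z in X, (∫ x in X, q x * (Kδ z x * u z / π z) ^ 2) * π z)
      ≤ (volume X).toReal * cM / cm ^ 2 * (δ ^ d)⁻¹ * ε⁻¹ :=
  kernel_estimator_second_moment_bound_general X hXmeas hXpos u hum hu01 δ hδ Kδ hK cm cM hcm hvol ε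
    hε π hπm hπlb q hqm hq0 hq1
end

section
/- Fix integers $T \ge 1$ and a window length $1 \le m \le T$, and partition $\{1,\dots,T\}$ into contiguous windows $\mathcal{T}_1,\dots,\mathcal{T}_W$ each of length at most $m$. Let $X$ be compact, $u_1,\dots,u_T : X \to \mathbb{R}$ continuous payoff functions, and $\pi_1,\dots,\pi_T$ probability measures on $X$. Define the dynamic regret $D(T) = \sum_{t=1}^T(\max_x u_t(x) - \int u_t\,d\pi_t)$, the per-window static regret $R(\mathcal{T}_w) = \max_x\sum_{t\in\mathcal{T}_w}(u_t(x) - \int u_t\,d\pi_t)$, and the total variation $V = \sum_{t=1}^{T-1}\|u_{t+1}-u_t\|_\infty$. Then $D(T) \le \sum_{w=1}^W R(\mathcal{T}_w) + 2m\,V$. -/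
/-!
Split the horizon into the windows. On a window `(a, b]` compare every `u t` with `u (a + 1)`:
by telescoping, `|u t - u (a + 1)|` is at most the variation `V_w` accumulated inside the window,
so a maximiser `x₀` of `u (a + 1)` is `2 V_w`-optimal for every `u t` with `t` in the window.
Playing `x₀` throughout the window therefore loses at most `2 m V_w` against the dynamic
benchmark, and it earns at most the static regret of the window. The windows' variations add
up to at most the total variation `V`.
-/

open MeasureTheory Finset

section Partition

variable {M : Type*} [AddCommMonoid M]

theorem Finset.sum_range_sum_Ioc_of_monotoneOn (f : ℕ → M) {e : ℕ → ℕ} {W : ℕ}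
    (he : MonotoneOn e (Set.Iic W)) :
    ∑ w ∈ range W, ∑ t ∈ Ioc (e w) (e (w + 1)), f t = ∑ t ∈ Ioc (e 0) (e W), f t := by
  induction W with
  | zero => simp
  | succ W ih =>
    rw [sum_range_succ, ih (he.mono (Set.Iic_subset_Iic.2 W.le_succ))]
    exact sum_Ioc_consecutive f (he (by simp) (by simp) W.zero_le)
      (he (by simp) (by simp) W.le_succ)

variable [PartialOrder M] [IsOrderedAddMonoid M]

theorem Finset.sum_Ioo_add_sum_Ioo_le {f : ℕ → M} (hf : ∀ i, 0 ≤ f i) {a b c : ℕ}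
    (hab : a ≤ b) (hbc : b ≤ c) :
    ∑ i ∈ Ioo a b, f i + ∑ i ∈ Ioo b c, f i ≤ ∑ i ∈ Ioo a c, f i := by
  rw [← sum_union (disjoint_left.2 fun i hi hi' => by simp only [mem_Ioo] at hi hi'; omega)]
  exact sum_le_sum_of_subset_of_nonneg
    (fun i hi => by simp only [mem_union, mem_Ioo] at hi ⊢; omega) fun i _ _ => hf i

theorem Finset.sum_range_sum_Ioo_le_of_monotoneOn {f : ℕ → M} (hf : ∀ i, 0 ≤ f i)
    {e : ℕ → ℕ} {W : ℕ} (he : MonotoneOn e (Set.Iic W)) :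
    ∑ w ∈ range W, ∑ t ∈ Ioo (e w) (e (w + 1)), f t ≤ ∑ t ∈ Ioo (e 0) (e W), f t := by
  induction W with
  | zero => simp
  | succ W ih =>
    rw [sum_range_succ]
    exact (add_le_add_left (ih (he.mono (Set.Iic_subset_Iic.2 W.le_succ))) _).trans
      (sum_Ioo_add_sum_Ioo_le hf (he (by simp) (by simp) W.zero_le)
        (he (by simp) (by simp) W.le_succ))

end Partition

theorem iSup_sub_le_two_mul_of_forall_abs_sub_le {X : Type*} [Nonempty X] {f g : X → ℝ}
    {δ : ℝ} {x₀ : X} (hg : ∀ y, g y ≤ g x₀) (hfg : ∀ y, |f y - g y| ≤ δ) :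
    (⨆ x, f x) - f x₀ ≤ 2 * δ := by
  have hf_le (y : X) : f y ≤ f x₀ + 2 * δ := by
    have h₁ := (le_abs_self _).trans (hfg y)
    have h₂ := (neg_le_abs _).trans (hfg x₀)
    linarith [hg y]
  linarith [ciSup_le hf_le]

section Window

variable {X : Type*} [TopologicalSpace X] [CompactSpace X] {u : ℕ → X → ℝ}

theorem abs_sub_le_sum_Ico_iSup_abs_sub (hu : ∀ t, Continuous (u t)) {a t : ℕ} (hat : a ≤ t)
    (y : X) : |u t y - u a y| ≤ ∑ r ∈ Ico a t, ⨆ x, |u (r + 1) x - u r x| := by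
  calc |u t y - u a y| = dist (u a y) (u t y) := by rw [Real.dist_eq, abs_sub_comm]
    _ ≤ ∑ r ∈ Ico a t, dist (u r y) (u (r + 1) y) := dist_le_Ico_sum_dist (fun s => u s y) hat
    _ ≤ ∑ r ∈ Ico a t, ⨆ x, |u (r + 1) x - u r x| := by
      refine sum_le_sum fun r _ => ?_
      rw [Real.dist_eq, abs_sub_comm]
      exact le_ciSup (isCompact_range ((hu (r + 1)).sub (hu r)).abs).bddAbove y

variable [Nonempty X]

theorem Continuous.exists_forall_ge_of_compactSpace {f : X → ℝ} (hf : Continuous f) :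
    ∃ x, ∀ y, f y ≤ f x := by
  obtain ⟨x, -, hx⟩ := isCompact_univ.exists_isMaxOn Set.univ_nonempty hf.continuousOn
  exact ⟨x, fun y => hx (Set.mem_univ y)⟩

theorem sum_Ioc_iSup_sub_le_iSup_sum_add (hu : ∀ t, Continuous (u t)) (c : ℕ → ℝ)
    {a b m : ℕ} (hm : b - a ≤ m) :
    ∑ t ∈ Ioc a b, ((⨆ x, u t x) - c t)
      ≤ (⨆ x, ∑ t ∈ Ioc a b, (u t x - c t))
        + 2 * m * ∑ r ∈ Ioo a b, ⨆ x, |u (r + 1) x - u r x| := by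
  set V := ∑ r ∈ Ioo a b, ⨆ x, |u (r + 1) x - u r x|
  have hV : 0 ≤ V := sum_nonneg fun r _ => Real.iSup_nonneg fun _ => abs_nonneg _
  obtain ⟨x₀, hx₀⟩ := (hu (a + 1)).exists_forall_ge_of_compactSpace
  have h_dynamic : ∀ t ∈ Ioc a b, (⨆ x, u t x) - u t x₀ ≤ 2 * V := by
    intro t ht
    rw [mem_Ioc] at ht
    refine iSup_sub_le_two_mul_of_forall_abs_sub_le hx₀ fun y =>
      (abs_sub_le_sum_Ico_iSup_abs_sub hu ht.1 y).trans ?_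
    exact sum_le_sum_of_subset_of_nonneg
      (fun r hr => by simp only [mem_Ico, mem_Ioo] at hr ⊢; omega)
      fun _ _ _ => Real.iSup_nonneg fun _ => abs_nonneg _
  have h_static : ∑ t ∈ Ioc a b, (u t x₀ - c t) ≤ ⨆ x, ∑ t ∈ Ioc a b, (u t x - c t) :=
    le_ciSup (isCompact_range (continuous_finsetSum _ fun t _ =>
      (hu t).sub continuous_const)).bddAbove x₀
  have h_card : ∑ t ∈ Ioc a b, ((⨆ x, u t x) - u t x₀) ≤ m * (2 * V) := by
    refine (sum_le_card_nsmul _ _ _ h_dynamic).trans ?_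
    rw [Nat.card_Ioc, nsmul_eq_mul]
    exact mul_le_mul_of_nonneg_right (by exact_mod_cast hm) (by positivity)
  calc ∑ t ∈ Ioc a b, ((⨆ x, u t x) - c t)
      = ∑ t ∈ Ioc a b, ((⨆ x, u t x) - u t x₀) + ∑ t ∈ Ioc a b, (u t x₀ - c t) := by
        rw [← sum_add_distrib]
        exact sum_congr rfl fun t _ => by ring
    _ ≤ _ := by linarith

end Window

theorem dynamic_regret_window_decomposition_general
    {X : Type*} [TopologicalSpace X] [CompactSpace X] [Nonempty X]
    [MeasurableSpace X]
    (T m : ℕ)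
    -- window boundaries: `0 = e 0 < e 1 < … < e W = T`, window `w` is
    -- `Icc (e w + 1) (e (w+1))`, of length `e (w+1) - e w ≤ m`
    (W : ℕ) (e : ℕ → ℕ) (he0 : e 0 = 0) (heW : e W = T)
    (hemono : StrictMonoOn e (Set.Iic W))
    (helen : ∀ w < W, e (w + 1) - e w ≤ m)
    (u : ℕ → X → ℝ) (huc : ∀ t, Continuous (u t))
    (π : ℕ → Measure X) :
    ∑ t ∈ Finset.Icc 1 T, ((⨆ x : X, u t x) - ∫ z, u t z ∂(π t))
      ≤ (∑ w ∈ Finset.range W,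
            ⨆ x : X, ∑ t ∈ Finset.Icc (e w + 1) (e (w + 1)),
              (u t x - ∫ z, u t z ∂(π t)))
        + 2 * m * ∑ t ∈ Finset.Icc 1 (T - 1), ⨆ x : X, |u (t + 1) x - u t x| := by
  have he := hemono.monotoneOn
  have h_rounds : Icc 1 T = Ioc (e 0) (e W) := by
    ext t; simp only [mem_Icc, mem_Ioc, he0, heW]; omega
  have h_pairs : Icc 1 (T - 1) = Ioo (e 0) (e W) := by
    ext t; simp only [mem_Icc, mem_Ioo, he0, heW]; omega
  simp only [Icc_add_one_left_eq_Ioc, h_rounds, h_pairs]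
  rw [← sum_range_sum_Ioc_of_monotoneOn _ he]
  calc _ ≤ ∑ w ∈ range W,
          ((⨆ x, ∑ t ∈ Ioc (e w) (e (w + 1)), (u t x - ∫ z, u t z ∂(π t)))
            + 2 * m * ∑ r ∈ Ioo (e w) (e (w + 1)), ⨆ x, |u (r + 1) x - u r x|) :=
        sum_le_sum fun w hw => sum_Ioc_iSup_sub_le_iSup_sum_add huc _ (helen w (mem_range.1 hw))
    _ ≤ _ := by
      rw [sum_add_distrib, ← mul_sum]
      gcongr
      exact sum_range_sum_Ioo_le_of_monotoneOn
        (fun _ => Real.iSup_nonneg fun _ => abs_nonneg _) he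

/-- dynamic regret is bounded by the sum of per-window static
regrets plus `2 m V`, where `V` is the total variation of the payoffs. -/
theorem dynamic_regret_window_decomposition
    {X : Type*} [TopologicalSpace X] [CompactSpace X] [Nonempty X]
    [MeasurableSpace X] [BorelSpace X]
    (T m : ℕ) (hT : 1 ≤ T) (hm1 : 1 ≤ m) (hmT : m ≤ T)
    -- window boundaries: `0 = e 0 < e 1 < … < e W = T`, window `w` is
    -- `Icc (e w + 1) (e (w+1))`, of length `e (w+1) - e w ≤ m`
    (W : ℕ) (e : ℕ → ℕ) (he0 : e 0 = 0) (heW : e W = T)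
    (hemono : StrictMonoOn e (Set.Iic W))
    (helen : ∀ w < W, e (w + 1) - e w ≤ m)
    (u : ℕ → X → ℝ) (huc : ∀ t, Continuous (u t))
    (π : ℕ → Measure X) (hπ : ∀ t, IsProbabilityMeasure (π t)) :
    ∑ t ∈ Finset.Icc 1 T, ((⨆ x : X, u t x) - ∫ z, u t z ∂(π t))
      ≤ (∑ w ∈ Finset.range W,
            ⨆ x : X, ∑ t ∈ Finset.Icc (e w + 1) (e (w + 1)),
              (u t x - ∫ z, u t z ∂(π t)))
        + 2 * m * ∑ t ∈ Finset.Icc 1 (T - 1), ⨆ x : X, |u (t + 1) x - u t x| :=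
  dynamic_regret_window_decomposition_general T m W e he0 heW hemono helen u huc π
end
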